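/- Let B be a deterministic thrifty BP computing DE^G_k correctly on the hard inputs D_{G,k}. Then for any I ∈ D_{G,k} and non-leaf node u, some state on I's computation path queries the thrifty u-variable of I, and for every such state q and each child v of u, some earlier state on I's path queries the v-variable of I. -/

import Mathlib

/-- A deterministic `k`-way branching program with variables `Var` and outputs `Out`.
States are either query states (labeled by `query`, with `k` out-edges given by `next`)
or output states (where `out` is `some o`). -/
structure BP (Var : Type) (k : ℕ) (Out : Type) where
  State : Type
  [finState : Fintype State]
  start : State
  query : State → Var
  next : State → Fin k → State
  out : State → Option Out

namespace BP

variable {Var Out : Type} {k : ℕ}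

/-- The number of states. -/
noncomputable def size (B : BP Var k Out) : ℕ := @Fintype.card B.State B.finState

/-- The computation path of input `I`. -/
def path (B : BP Var k Out) (I : Var → Fin k) : ℕ → B.State
  | 0 => B.start
  | t + 1 => B.next (B.path I t) (I (B.query (B.path I t)))

/-- The computation of `I` is still running at time `t`: no output state was reached earlier. -/
def VisitsAt (B : BP Var k Out) (I : Var → Fin k) (t : ℕ) : Prop :=
  ∀ s < t, B.out (B.path I s) = none

/-- State `q` is on the computation path of input `I`. -/
def Visits (B : BP Var k Out) (I : Var → Fin k) (q : B.State) : Prop :=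
  ∃ t, B.VisitsAt I t ∧ B.path I t = q

/-- `B` computes the function `g`. -/
def Computes (B : BP Var k Out) (g : (Var → Fin k) → Out) : Prop :=
  ∀ I, ∃ t, B.VisitsAt I t ∧ B.out (B.path I t) = some (g I)

end BP
/-- A connected rooted dag: nodes `Fin n`, with `child v u` meaning there is an arc from `v`
to `u` (so `v` is a child of `u`).  The relation is well-founded (the dag is acyclic), the
root is the unique node of out-degree `0` (every other node has a parent, which also makes
the dag connected). -/
structure RootedDag where
  n : ℕ
  child : Fin n → Fin n → Prop
  wf : WellFounded child
  root : Fin n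
  root_no_parent : ∀ u, ¬ child root u
  root_unique : ∀ u, u ≠ root → ∃ w, child u w

namespace RootedDag

/-- A leaf is a node of in-degree `0`. -/
def IsLeaf (G : RootedDag) (u : Fin G.n) : Prop := ∀ v, ¬ G.child v u

/-- The input variables of the dag evaluation problem `DE^G_k`: a leaf variable `l_u` for each
leaf `u`, and a variable `f_u(a⃗)` for each internal node `u` and each assignment `a⃗` of values
in `[k]` to the children of `u`. -/
def Var (G : RootedDag) (k : ℕ) : Type :=
  {u : Fin G.n // G.IsLeaf u} ⊕
    (Σ _u : {u : Fin G.n // ¬ G.IsLeaf u}, ({v : Fin G.n // G.child v _u.1} → Fin k))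

/-- The value of each node of `G` under input `I`: leaves take their `l` value, and an internal
node applies its function to the values of its children. -/
noncomputable def val (G : RootedDag) {k : ℕ} (I : G.Var k → Fin k) : Fin G.n → Fin k :=
  WellFounded.fix (C := fun _ => Fin k) G.wf fun u ih =>
    letI := Classical.dec (G.IsLeaf u)
    if h : G.IsLeaf u then I (Sum.inl ⟨u, h⟩)
    else I (Sum.inr ⟨⟨u, h⟩, fun v => ih v.1 v.2⟩)

/-- `B` solves `DE^G_k`: on every input it halts with output `true` iff the value of the
root is `1` (the first element of `[k]`). -/
def SolvesDE (G : RootedDag) {k : ℕ} (hk : 0 < k) (B : BP (G.Var k) k Bool) : Prop :=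
  B.Computes fun I => decide (G.val I G.root = ⟨0, hk⟩)

/-- `B` is thrifty: whenever a state querying `f_u(a⃗)` is visited by input `I`, then `a⃗` is
exactly the tuple of values of the children of `u` under `I`. -/
def Thrifty (G : RootedDag) {k : ℕ} (B : BP (G.Var k) k Bool) : Prop :=
  ∀ (I : G.Var k → Fin k) (q : B.State) (u : {u : Fin G.n // ¬ G.IsLeaf u})
    (a : {v : Fin G.n // G.child v u.1} → Fin k),
    B.Visits I q → B.query q = Sum.inr ⟨u, a⟩ → ∀ v, a v = G.val I v.1

end RootedDag

/-- The hard inputs `D_{G,k}`: inputs `I` such that every internal function `f_u^I` outputs `1`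
(the first element of `[k]`) except possibly on the tuple of the actual values of the
children of `u` under `I`. -/
def RootedDag.HardInputs (G : RootedDag) {k : ℕ} (hk : 0 < k) : Set (G.Var k → Fin k) :=
  {I | ∀ (u : {u : Fin G.n // ¬ G.IsLeaf u}) (a : {v : Fin G.n // G.child v u.1} → Fin k),
    a ≠ (fun v => G.val I v.1) → I (Sum.inr ⟨u, a⟩) = ⟨0, hk⟩}

/-- `B` computes `DE^G_k` correctly on every input in the set `S` (behavior elsewhere is
unconstrained). -/
def RootedDag.SolvesDEOn (G : RootedDag) {k : ℕ} (hk : 0 < k)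
    (B : BP (G.Var k) k Bool) (S : Set (G.Var k → Fin k)) : Prop :=
  ∀ I ∈ S, ∃ t, B.VisitsAt I t ∧
    B.out (B.path I t) = some (decide (G.val I G.root = ⟨0, hk⟩))

/-- State `q` queries the `u`-variable of input `I`: the leaf variable `l_u` if `u` is a leaf,
or the thrifty variable `f_u(val(v₁)[I], …)` if `u` is internal. -/
def QueriesNode (G : RootedDag) {k : ℕ} (B : BP (G.Var k) k Bool)
    (I : G.Var k → Fin k) (q : B.State) (u : Fin G.n) : Prop :=
  (∃ h : G.IsLeaf u, B.query q = Sum.inl ⟨u, h⟩) ∨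
  (∃ h : ¬ G.IsLeaf u, B.query q = Sum.inr ⟨⟨u, h⟩, fun v => G.val I v.1⟩)

/-!
An adversary argument. For any node values `g` there is an input `realize g` of `D_{G,k}` with
exactly these values. By thriftiness every variable queried on the path of `I` is the
`w`-variable of `I` for some node `w`, and it keeps its value in
`realize (update (val I) v b)` unless `w = v` or `w` is a parent of `v`. So if some child `v` of
`u` were not queried before the thrifty `u`-variable is (inductively, no parent of `v` was
queried earlier either), changing the value of `v` would not change the path, and thriftiness
of the modified input at the query of `f_u` fails. If the root variable were never queried,
changing the value of the root would not change the output. Every other node is reached by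
walking down from the root: a node is queried before its parent's thrifty variable is.
-/

theorem WellFounded.swap_of_finite {α : Type*} [Finite α] {r : α → α → Prop}
    (h : WellFounded r) : WellFounded (Function.swap r) := by
  have : Std.Irrefl (Relation.TransGen (Function.swap r)) :=
    ⟨fun a ha => h.transGen.irrefl.irrefl a (Relation.transGen_swap.mp ha)⟩
  exact Subrelation.wf Relation.TransGen.single (Finite.wellFounded_of_trans_of_irrefl _)

namespace BP

variable {Var Out : Type} {k : ℕ} {B : BP Var k Out}

theorem VisitsAt.mono {I : Var → Fin k} {s t : ℕ} (h : B.VisitsAt I t) (hst : s ≤ t) :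
    B.VisitsAt I s :=
  fun r hr => h r (hr.trans_le hst)

theorem path_eq_of_forall_lt {I J : Var → Fin k} {t : ℕ}
    (h : ∀ s < t, J (B.query (B.path I s)) = I (B.query (B.path I s))) :
    B.path J t = B.path I t := by
  induction t with
  | zero => rfl
  | succ t ih =>
    have hpath : B.path J t = B.path I t := ih fun s hs => h s (hs.trans t.lt_succ_self)
    simp only [path, hpath, h t t.lt_succ_self]

theorem visitsAt_of_forall_lt {I J : Var → Fin k} {t : ℕ}
    (h : ∀ s < t, J (B.query (B.path I s)) = I (B.query (B.path I s))) (ht : B.VisitsAt I t) :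
    B.VisitsAt J t := fun s hs => by
  rw [path_eq_of_forall_lt fun r hr => h r (hr.trans hs)]
  exact ht s hs

theorem out_eq_of_visitsAt {I : Var → Fin k} {t t' : ℕ} {o o' : Out}
    (ht : B.VisitsAt I t) (ho : B.out (B.path I t) = some o)
    (ht' : B.VisitsAt I t') (ho' : B.out (B.path I t') = some o') : o = o' := by
  rcases lt_trichotomy t t' with hlt | rfl | hlt
  · simp [ht' t hlt] at ho
  · exact Option.some_injective _ (ho.symm.trans ho')
  · simp [ht t' hlt] at ho'

end BP

namespace RootedDag

variable {G : RootedDag} {k : ℕ}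

noncomputable def nodeVar (G : RootedDag) (I : G.Var k → Fin k) (u : Fin G.n) : G.Var k :=
  letI := Classical.dec (G.IsLeaf u)
  if h : G.IsLeaf u then Sum.inl ⟨u, h⟩ else Sum.inr ⟨⟨u, h⟩, fun v => G.val I v.1⟩

theorem nodeVar_of_isLeaf (I : G.Var k → Fin k) {u : Fin G.n} (hu : G.IsLeaf u) :
    G.nodeVar I u = Sum.inl ⟨u, hu⟩ :=
  dif_pos hu

theorem nodeVar_of_not_isLeaf (I : G.Var k → Fin k) {u : Fin G.n} (hu : ¬ G.IsLeaf u) :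
    G.nodeVar I u = Sum.inr ⟨⟨u, hu⟩, fun v => G.val I v.1⟩ :=
  dif_neg hu

theorem val_eq_apply_nodeVar (I : G.Var k → Fin k) (u : Fin G.n) :
    G.val I u = I (G.nodeVar I u) := by
  by_cases hu : G.IsLeaf u
  · rw [nodeVar_of_isLeaf I hu, val, WellFounded.fix_eq, dif_pos hu]
  · rw [nodeVar_of_not_isLeaf I hu, val, WellFounded.fix_eq, dif_neg hu]

theorem _root_.queriesNode_iff {B : BP (G.Var k) k Bool} {I : G.Var k → Fin k} {q : B.State}
    {u : Fin G.n} : QueriesNode G B I q u ↔ B.query q = G.nodeVar I u := by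
  by_cases hu : G.IsLeaf u <;> simp [QueriesNode, nodeVar, hu]

noncomputable def realize (G : RootedDag) (hk : 0 < k) (g : Fin G.n → Fin k) :
    G.Var k → Fin k
  | Sum.inl l => g l.1
  | Sum.inr ⟨w, a⟩ =>
    letI := Classical.propDecidable
    if a = (fun v => g v.1) then g w.1 else ⟨0, hk⟩

theorem realize_nodeVar (hk : 0 < k) {g : Fin G.n → Fin k} {I : G.Var k → Fin k}
    {u : Fin G.n} (h : ∀ v, G.child v u → g v = G.val I v) :
    G.realize hk g (G.nodeVar I u) = g u := by
  by_cases hu : G.IsLeaf u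
  · simp [nodeVar, hu, realize]
  · have htuple : (fun v : {v // G.child v u} => G.val I v.1) = fun v => g v.1 :=
      funext fun v => (h v.1 v.2).symm
    simp [nodeVar, hu, realize, htuple]

theorem val_realize (hk : 0 < k) (g : Fin G.n → Fin k) : G.val (G.realize hk g) = g := by
  funext u
  induction u using G.wf.induction with
  | _ u ih => rw [val_eq_apply_nodeVar, realize_nodeVar hk fun v hv => (ih v hv).symm]

theorem realize_mem_hardInputs (hk : 0 < k) (g : Fin G.n → Fin k) :
    G.realize hk g ∈ G.HardInputs hk := by
  intro u a ha
  rw [val_realize] at ha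
  simp [realize, ha]

variable {B : BP (G.Var k) k Bool}

theorem Thrifty.exists_query_eq_nodeVar (hthrifty : G.Thrifty B) {I : G.Var k → Fin k}
    {t : ℕ} (ht : B.VisitsAt I t) : ∃ w, B.query (B.path I t) = G.nodeVar I w := by
  rcases hq : B.query (B.path I t) with ⟨w, hw⟩ | ⟨⟨w, hw⟩, a⟩
  · exact ⟨w, (nodeVar_of_isLeaf I hw).symm⟩
  · have ha : a = fun v => G.val I v.1 := funext (hthrifty I _ _ a ⟨t, ht, rfl⟩ hq)
    exact ⟨w, by rw [nodeVar_of_not_isLeaf I hw, ha]⟩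

theorem Thrifty.realize_update_apply_query (hthrifty : G.Thrifty B) (hk : 0 < k)
    {I : G.Var k → Fin k} {t : ℕ} (ht : B.VisitsAt I t) (v : Fin G.n) (b : Fin k)
    (hfree : ∀ s < t, ∀ w, B.query (B.path I s) = G.nodeVar I w → w ≠ v ∧ ¬ G.child v w) :
    ∀ s < t, G.realize hk (Function.update (G.val I) v b) (B.query (B.path I s)) =
      I (B.query (B.path I s)) := by
  intro s hs
  obtain ⟨w, hw⟩ := hthrifty.exists_query_eq_nodeVar (ht.mono hs.le)
  obtain ⟨hwv, hvw⟩ := hfree s hs w hw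
  rw [hw, realize_nodeVar hk fun y hy => Function.update_of_ne (by rintro rfl; exact hvw hy) _ _,
    Function.update_of_ne hwv, val_eq_apply_nodeVar]

theorem Thrifty.exists_lt_query_child [Nontrivial (Fin k)] (hthrifty : G.Thrifty B)
    (hk : 0 < k) {I : G.Var k → Fin k} {t : ℕ} (ht : B.VisitsAt I t) {u : Fin G.n}
    (hq : B.query (B.path I t) = G.nodeVar I u) {v : Fin G.n} (hv : G.child v u) :
    ∃ s < t, B.query (B.path I s) = G.nodeVar I v := by
  induction t using Nat.strong_induction_on generalizing u v with
  | _ t ih =>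
  by_contra! hnot
  obtain ⟨b, hb⟩ := exists_ne (G.val I v)
  have hfree : ∀ s < t, ∀ w, B.query (B.path I s) = G.nodeVar I w → w ≠ v ∧ ¬ G.child v w := by
    refine fun s hs w hw => ⟨by rintro rfl; exact hnot s hs hw, fun hvw => ?_⟩
    obtain ⟨r, hrs, hr⟩ := ih s hs (ht.mono hs.le) hw hvw
    exact hnot r (hrs.trans hs) hr
  have hagree := hthrifty.realize_update_apply_query hk ht v b hfree
  set J := G.realize hk (Function.update (G.val I) v b)
  have hu : ¬ G.IsLeaf u := fun h => h v hv
  have hJ := hthrifty J (B.path I t) ⟨u, hu⟩ _ ⟨t, BP.visitsAt_of_forall_lt hagree ht,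
    BP.path_eq_of_forall_lt hagree⟩ (hq.trans (nodeVar_of_not_isLeaf I hu)) ⟨v, hv⟩
  rw [val_realize, Function.update_self] at hJ
  exact hb hJ.symm

theorem Thrifty.exists_query_nodeVar_root [Nontrivial (Fin k)] (hthrifty : G.Thrifty B)
    (hk : 0 < k) (hsolve : G.SolvesDEOn hk B (G.HardInputs hk)) {I : G.Var k → Fin k}
    (hI : I ∈ G.HardInputs hk) :
    ∃ t, B.VisitsAt I t ∧ B.query (B.path I t) = G.nodeVar I G.root := by
  by_contra! hnot
  obtain ⟨b, hb⟩ : ∃ b : Fin k, (b = ⟨0, hk⟩ ↔ G.val I G.root ≠ ⟨0, hk⟩) := by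
    by_cases h : G.val I G.root = ⟨0, hk⟩
    · obtain ⟨b, hb⟩ := exists_ne (⟨0, hk⟩ : Fin k)
      exact ⟨b, iff_of_false hb (not_not.mpr h)⟩
    · exact ⟨_, iff_of_true rfl h⟩
  obtain ⟨t, ht, hout⟩ := hsolve I hI
  have hagree := hthrifty.realize_update_apply_query hk ht G.root b fun s hs w hw =>
    ⟨by rintro rfl; exact hnot s (ht.mono hs.le) hw, G.root_no_parent w⟩
  set J := G.realize hk (Function.update (G.val I) G.root b)
  obtain ⟨t', ht', hout'⟩ := hsolve J (realize_mem_hardInputs hk _)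
  have hsame := BP.out_eq_of_visitsAt (BP.visitsAt_of_forall_lt hagree ht)
    (by rw [BP.path_eq_of_forall_lt hagree, hout]) ht' hout'
  rw [val_realize, Function.update_self] at hsame
  simp [hb] at hsame

theorem Thrifty.exists_query_nodeVar [Nontrivial (Fin k)] (hthrifty : G.Thrifty B)
    (hk : 0 < k) (hsolve : G.SolvesDEOn hk B (G.HardInputs hk)) {I : G.Var k → Fin k}
    (hI : I ∈ G.HardInputs hk) (u : Fin G.n) :
    ∃ t, B.VisitsAt I t ∧ B.query (B.path I t) = G.nodeVar I u := by
  induction u using G.wf.swap_of_finite.induction with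
  | _ u ih =>
  by_cases hroot : u = G.root
  · exact hroot ▸ hthrifty.exists_query_nodeVar_root hk hsolve hI
  obtain ⟨w, hw⟩ := G.root_unique u hroot
  obtain ⟨t, ht, hq⟩ := ih w hw
  obtain ⟨s, hs, hq'⟩ := hthrifty.exists_lt_query_child hk ht hq hw
  exact ⟨s, ht.mono hs.le, hq'⟩

end RootedDag

/-- For a deterministic thrifty BP computing `DE^G_k` correctly on the hard inputs `D_{G,k}`:
for any `I ∈ D_{G,k}` and non-leaf node `u`, some state on `I`'s computation path queries the
thrifty `u`-variable of `I`, and for every such state, each child `v` of `u` has its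
`v`-variable queried strictly earlier on `I`'s path. -/
theorem stmt12 (G : RootedDag) (k : ℕ) (hk : 2 ≤ k)
    (B : BP (G.Var k) k Bool)
    (hsolve : G.SolvesDEOn (by omega) B (G.HardInputs (by omega)))
    (hthrifty : G.Thrifty B)
    (I : G.Var k → Fin k) (hI : I ∈ G.HardInputs (by omega : (0:ℕ) < k))
    (u : Fin G.n) (hu : ¬ G.IsLeaf u) :
    (∃ t, B.VisitsAt I t ∧
        B.query (B.path I t) = Sum.inr ⟨⟨u, hu⟩, fun v => G.val I v.1⟩) ∧
    (∀ t, B.VisitsAt I t →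
        B.query (B.path I t) = Sum.inr ⟨⟨u, hu⟩, fun v => G.val I v.1⟩ →
        ∀ v : Fin G.n, G.child v u →
          ∃ s < t, QueriesNode G B I (B.path I s) v) := by
  have : Nontrivial (Fin k) := Fin.nontrivial_iff_two_le.mpr hk
  rw [← RootedDag.nodeVar_of_not_isLeaf I hu]
  refine ⟨hthrifty.exists_query_nodeVar (by omega) hsolve hI u, fun t ht hq v hv => ?_⟩
  obtain ⟨s, hs, hqv⟩ := hthrifty.exists_lt_query_child (by omega) ht hq hv
  exact ⟨s, hs, queriesNode_iff.mpr hqv⟩
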